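/- Fix n ≥ 2, b_1,...,b_n ∈ (0,1), r' > 1 with ∑_{i=1}^n b_i^{r'} = 1, and r with 1/r + 1/r' = 1. For each l, the vector x_l = ∑_{s ∈ {1,...,n}^l} (∏_i b_{s_i})^{r'/r} e_s has Tsirelson norm exactly 1 in T(A_n, b̄): namely ‖x_l‖_{T(A_n,b̄)} = 1. -/

import Mathlib

/-!
By induction on `W`, Hölder's inequality together with `∑ b_i^{r'} ≤ 1` gives
`f(x) ≤ (∑_{k ∈ supp f} |x_k|^r)^{1/r}` for every `f ∈ W`; hence `‖x‖_T ≤ ‖x‖_{ℓ_r}`, and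
`‖x_l‖_{ℓ_r}^r = ∑_s (∏_i b_{s_i})^{r'} = (∑_i b_i^{r'})^l = 1`. Conversely
`f_l = ∑_s (∏_i b_{s_i}) e_s^*` lies in `W`, being the `b`-weighted combination of `n`
successive shifted copies of `f_{l-1}`, and `f_l(x_l)` is the same sum because `1 + r'/r = r'`.
-/

/-- The norming set `W[(𝒜_n, b̄)]` of the Tsirelson-type space `T(𝒜_n, b̄)`. -/
inductive IsW (n : ℕ) (b : Fin n → ℝ) : (ℕ →₀ ℝ) → Prop
  | unit (k : ℕ) (ε : ℝ) (hε : ε = 1 ∨ ε = -1) : IsW n b (Finsupp.single k ε)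
  | combine (a : ℕ) (ha : 1 ≤ a) (han : a ≤ n) (f : Fin a → (ℕ →₀ ℝ))
      (hf : ∀ i, IsW n b (f i))
      (hsucc : ∀ i j : Fin a, i < j → ∀ p ∈ (f i).support, ∀ q ∈ (f j).support, p < q) :
      IsW n b (∑ i : Fin a, b (Fin.castLE han i) • f i)

/-- The Tsirelson-type norm: `‖x‖ = sup { ⟨f, x⟩ : f ∈ W[(𝒜_n, b̄)] }`. -/
noncomputable def tnorm (n : ℕ) (b : Fin n → ℝ) (x : ℕ →₀ ℝ) : ℝ :=
  sSup {y | ∃ f : ℕ →₀ ℝ, IsW n b f ∧ y = f.sum fun k c => c * x k}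

/-- The identification of `M_l = {1,…,n}^l` with the interval `{0,…,n^l - 1}` of `ℕ`,
via the lexicographic (most-significant-digit-first) base-`n` enumeration. -/
def enc (n l : ℕ) (s : Fin l → Fin n) : ℕ :=
  ∑ i : Fin l, (s i : ℕ) * n ^ (l - 1 - (i : ℕ))

open Finset

lemma enc_succ (n l : ℕ) (s : Fin (l + 1) → Fin n) :
    enc n (l + 1) s = enc n l (Fin.tail s) + (s 0 : ℕ) * n ^ l := by
  rw [enc, Fin.sum_univ_succ, add_comm]
  simp only [Fin.val_zero, Fin.val_succ, Nat.sub_zero, Nat.add_sub_cancel, enc, Fin.tail]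
  congr 1
  refine sum_congr rfl fun j _ => ?_
  congr 2
  omega

lemma enc_lt (n l : ℕ) (s : Fin l → Fin n) : enc n l s < n ^ l := by
  induction l with
  | zero => simp [enc]
  | succ l ih =>
    calc enc n (l + 1) s = enc n l (Fin.tail s) + (s 0 : ℕ) * n ^ l := enc_succ n l s
      _ < ((s 0 : ℕ) + 1) * n ^ l := by linarith [ih (Fin.tail s)]
      _ ≤ n ^ (l + 1) := by rw [pow_succ']; exact Nat.mul_le_mul_right _ (s 0).isLt

lemma enc_injective (n l : ℕ) : Function.Injective (enc n l) := by
  induction l with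
  | zero => exact fun s t _ => funext fun i => i.elim0
  | succ l ih =>
    intro s t hst
    have hpos : 0 < n ^ l := (Nat.zero_le _).trans_lt (enc_lt n l (Fin.tail s))
    have hdiv (u : Fin (l + 1) → Fin n) : enc n (l + 1) u / n ^ l = u 0 := by
      rw [enc_succ, Nat.add_mul_div_right _ _ hpos, Nat.div_eq_of_lt (enc_lt n l _), zero_add]
    have hmod (u : Fin (l + 1) → Fin n) : enc n (l + 1) u % n ^ l = enc n l (Fin.tail u) := by
      rw [enc_succ, Nat.add_mul_mod_self_right, Nat.mod_eq_of_lt (enc_lt n l _)]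
    have h0 : s 0 = t 0 := Fin.ext (by rw [← hdiv s, ← hdiv t, hst])
    have htail : Fin.tail s = Fin.tail t := ih (by rw [← hmod s, ← hmod t, hst])
    rw [← Fin.cons_self_tail s, ← Fin.cons_self_tail t, h0, htail]

lemma IsW.mapDomain_add {n : ℕ} {b : Fin n → ℝ} {f : ℕ →₀ ℝ} (hf : IsW n b f) (m : ℕ) :
    IsW n b (f.mapDomain (· + m)) := by
  classical
  induction hf with
  | unit k ε hε => rw [Finsupp.mapDomain_single]; exact .unit _ _ hε
  | combine a ha han f _ hsucc ih =>
    simp only [Finsupp.mapDomain_finsetSum, Finsupp.mapDomain_smul]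
    refine .combine a ha han _ ih fun i j hij p hp q hq => ?_
    obtain ⟨p, hp', rfl⟩ := mem_image.mp (Finsupp.mapDomain_support hp)
    obtain ⟨q, hq', rfl⟩ := mem_image.mp (Finsupp.mapDomain_support hq)
    exact Nat.add_lt_add_right (hsucc i j hij p hp' q hq') m

noncomputable def productFunctional (n : ℕ) (b : Fin n → ℝ) (l : ℕ) : ℕ →₀ ℝ :=
  ∑ s : Fin l → Fin n, Finsupp.single (enc n l s) (∏ i, b (s i))

lemma productFunctional_support_subset (n : ℕ) (b : Fin n → ℝ) (l : ℕ) :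
    (productFunctional n b l).support ⊆ range (n ^ l) := by
  classical
  refine Finsupp.support_finsetSum.trans (biUnion_subset.mpr fun s _ => ?_)
  exact Finsupp.support_single_subset.trans
    (singleton_subset_iff.mpr (mem_range.mpr (enc_lt n l s)))

lemma productFunctional_succ (n : ℕ) (b : Fin n → ℝ) (l : ℕ) :
    productFunctional n b (l + 1) =
      ∑ i : Fin n, b i • (productFunctional n b l).mapDomain (· + (i : ℕ) * n ^ l) := by
  rw [productFunctional, ← (Fin.consEquiv fun _ => Fin n).sum_comp, Fintype.sum_prod_type]
  refine sum_congr rfl fun i _ => ?_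
  simp only [productFunctional, Finsupp.mapDomain_finsetSum, Finsupp.mapDomain_single,
    smul_sum, Finsupp.smul_single, smul_eq_mul]
  refine sum_congr rfl fun t _ => ?_
  simp [Fin.consEquiv, enc_succ, Fin.prod_univ_succ]

lemma isW_productFunctional {n : ℕ} (hn : 0 < n) (b : Fin n → ℝ) (l : ℕ) :
    IsW n b (productFunctional n b l) := by
  classical
  induction l with
  | zero => simpa [productFunctional, enc] using IsW.unit (b := b) 0 1 (.inl rfl)
  | succ l ih =>
    rw [productFunctional_succ]
    refine .combine n hn le_rfl _ (fun i => ih.mapDomain_add _) fun i j hij p hp q hq => ?_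
    obtain ⟨p, hp', rfl⟩ := mem_image.mp (Finsupp.mapDomain_support hp)
    obtain ⟨q, -, rfl⟩ := mem_image.mp (Finsupp.mapDomain_support hq)
    have hpl : p < n ^ l := mem_range.mp (productFunctional_support_subset n b l hp')
    calc p + (i : ℕ) * n ^ l < ((i : ℕ) + 1) * n ^ l := by linarith
      _ ≤ (j : ℕ) * n ^ l := Nat.mul_le_mul_right _ hij
      _ ≤ q + (j : ℕ) * n ^ l := Nat.le_add_left _ _

lemma sum_mul_rpow_one_div_le_of_sum_rpow_le_one {ι : Type*} (s : Finset ι) {p q : ℝ}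
    (hpq : p.HolderConjugate q) {w S : ι → ℝ} (hw : ∀ i ∈ s, 0 ≤ w i) (hS : ∀ i ∈ s, 0 ≤ S i)
    (hw1 : ∑ i ∈ s, w i ^ p ≤ 1) :
    ∑ i ∈ s, w i * S i ^ (1 / q) ≤ (∑ i ∈ s, S i) ^ (1 / q) := by
  have hS' : ∀ i ∈ s, (S i ^ (1 / q)) ^ q = S i := fun i hi => by
    rw [← Real.rpow_mul (hS i hi), one_div_mul_cancel hpq.symm.ne_zero, Real.rpow_one]
  calc ∑ i ∈ s, w i * S i ^ (1 / q)
      ≤ (∑ i ∈ s, w i ^ p) ^ (1 / p) * (∑ i ∈ s, (S i ^ (1 / q)) ^ q) ^ (1 / q) :=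
        Real.inner_le_Lp_mul_Lq_of_nonneg s hpq hw fun i hi => Real.rpow_nonneg (hS i hi) _
    _ ≤ 1 * (∑ i ∈ s, S i) ^ (1 / q) := by
        rw [sum_congr rfl hS']
        refine mul_le_mul_of_nonneg_right ?_ (Real.rpow_nonneg (sum_nonneg hS) _)
        exact Real.rpow_le_one (sum_nonneg fun i hi => Real.rpow_nonneg (hw i hi) _) hw1
          (one_div_pos.mpr hpq.pos).le
    _ = (∑ i ∈ s, S i) ^ (1 / q) := one_mul _

lemma Finsupp.sum_support_sum_smul {ι : Type*} (s : Finset ι) {c : ι → ℝ} (hc : ∀ i, c i ≠ 0)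
    {g : ι → ℕ →₀ ℝ} (hg : Pairwise fun i j => Disjoint (g i).support (g j).support)
    (φ : ℕ → ℝ) :
    ∑ k ∈ (∑ i ∈ s, c i • g i).support, φ k = ∑ i ∈ s, ∑ k ∈ (g i).support, φ k := by
  classical
  have hsupp (i : ι) : (c i • g i).support = (g i).support := Finsupp.support_smul_eq (hc i)
  rw [Finsupp.support_sum_eq_biUnion s fun i j hij => by simpa only [hsupp] using hg hij,
    sum_biUnion fun i _ j _ hij => by simpa only [hsupp] using hg hij]
  simp only [hsupp]

lemma IsW.linearCombination_le {n : ℕ} {b : Fin n → ℝ} (hb : ∀ i, 0 < b i) {r r' : ℝ}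
    (hrr' : r'.HolderConjugate r) (hsum : ∑ i, b i ^ r' ≤ 1) {f : ℕ →₀ ℝ} (hf : IsW n b f)
    (x : ℕ → ℝ) :
    Finsupp.linearCombination ℝ x f ≤ (∑ k ∈ f.support, |x k| ^ r) ^ (1 / r) := by
  induction hf with
  | unit k ε hε =>
    have hε0 : ε ≠ 0 := by rcases hε with rfl | rfl <;> norm_num
    rw [Finsupp.linearCombination_single, Finsupp.support_single _ hε0, sum_singleton,
      ← Real.rpow_mul (abs_nonneg _), mul_one_div_cancel hrr'.symm.ne_zero, Real.rpow_one,
      smul_eq_mul]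
    rcases hε with rfl | rfl
    · simpa using le_abs_self (x k)
    · simpa using neg_le_abs (x k)
  | combine a ha han g _ hsucc ih =>
    have hdisj : Pairwise fun i j => Disjoint (g i).support (g j).support := fun i j hij =>
      disjoint_left.mpr fun p hpi hpj => hij.lt_or_gt.elim
        (fun h => (hsucc i j h p hpi p hpj).false) (fun h => (hsucc j i h p hpj p hpi).false)
    have hsub : ∑ i : Fin a, b (Fin.castLE han i) ^ r' ≤ 1 :=
      ((sum_map univ (Fin.castLEEmb han) fun j => b j ^ r').symm.le.trans
        (sum_le_univ_sum_of_nonneg fun j => Real.rpow_nonneg (hb j).le _)).trans hsum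
    simp only [map_sum, map_smul, smul_eq_mul]
    rw [Finsupp.sum_support_sum_smul univ (fun i => (hb _).ne') hdisj]
    calc ∑ i, b (Fin.castLE han i) * Finsupp.linearCombination ℝ x (g i)
        ≤ ∑ i, b (Fin.castLE han i) * (∑ k ∈ (g i).support, |x k| ^ r) ^ (1 / r) :=
          sum_le_sum fun i _ => mul_le_mul_of_nonneg_left (ih i) (hb _).le
      _ ≤ _ := sum_mul_rpow_one_div_le_of_sum_rpow_le_one univ hrr' (fun i _ => (hb _).le)
          (fun i _ => sum_nonneg fun k _ => by positivity) hsub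

lemma IsW.linearCombination_le_sum_rpow_abs {n : ℕ} {b : Fin n → ℝ} (hb : ∀ i, 0 < b i)
    {r r' : ℝ} (hrr' : r'.HolderConjugate r) (hsum : ∑ i, b i ^ r' ≤ 1) {f : ℕ →₀ ℝ}
    (hf : IsW n b f) (x : ℕ →₀ ℝ) :
    Finsupp.linearCombination ℝ x f ≤ (x.sum fun _ v => |v| ^ r) ^ (1 / r) := by
  classical
  have hr : 0 < r := hrr'.symm.pos
  refine (hf.linearCombination_le hb hrr' hsum x).trans (Real.rpow_le_rpow
    (sum_nonneg fun k _ => by positivity) ?_ (one_div_pos.mpr hr).le)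
  rw [x.sum_of_support_subset subset_union_right _ fun k _ => by simp [hr.ne']]
  exact sum_le_sum_of_subset_of_nonneg subset_union_left fun k _ _ => by positivity

lemma tnorm_eq_of_isW {n : ℕ} {b : Fin n → ℝ} {x : ℕ →₀ ℝ} {t : ℝ}
    (hle : ∀ f, IsW n b f → Finsupp.linearCombination ℝ x f ≤ t) {g : ℕ →₀ ℝ} (hg : IsW n b g)
    (hgx : Finsupp.linearCombination ℝ x g = t) : tnorm n b x = t :=
  IsGreatest.csSup_eq ⟨⟨g, hg, hgx.symm⟩, by rintro _ ⟨f, hf, rfl⟩; exact hle f hf⟩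

section Injective

variable {ι : Type*} [Fintype ι] {e : ι → ℕ}

lemma Finsupp.sum_single_apply_of_injective (he : Function.Injective e) (c : ι → ℝ) (t : ι) :
    (∑ s, Finsupp.single (e s) (c s)) (e t) = c t := by
  classical
  simp only [Finsupp.finsetSum_apply, Finsupp.single_apply, he.eq_iff]
  exact Fintype.sum_ite_eq' t c

lemma Finsupp.sum_sum_single_of_injective (he : Function.Injective e) (c : ι → ℝ)
    {φ : ℝ → ℝ} (hφ : φ 0 = 0) :
    (∑ s, Finsupp.single (e s) (c s)).sum (fun _ v => φ v) = ∑ s, φ (c s) := by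
  classical
  have hsupp : (∑ s, Finsupp.single (e s) (c s)).support ⊆ univ.image e :=
    Finsupp.support_finsetSum.trans <| biUnion_subset.mpr fun s _ =>
      Finsupp.support_single_subset.trans
        (singleton_subset_iff.mpr (mem_image_of_mem e (mem_univ s)))
  rw [Finsupp.sum_of_support_subset _ hsupp _ fun _ _ => hφ, sum_image fun s _ t _ h => he h]
  simp only [Finsupp.sum_single_apply_of_injective he]

lemma Finsupp.linearCombination_sum_single_of_injective (he : Function.Injective e)
    (c d : ι → ℝ) :
    Finsupp.linearCombination ℝ (⇑(∑ s, Finsupp.single (e s) (c s)))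
      (∑ s, Finsupp.single (e s) (d s)) = ∑ s, d s * c s := by
  simp only [map_sum, Finsupp.linearCombination_single, smul_eq_mul,
    Finsupp.sum_single_apply_of_injective he]

end Injective

lemma sum_prod_rpow {n : ℕ} {b : Fin n → ℝ} (hb : ∀ i, 0 ≤ b i) (p : ℝ) (l : ℕ) :
    ∑ s : Fin l → Fin n, (∏ i, b (s i)) ^ p = (∑ j, b j ^ p) ^ l := by
  rw [Fintype.sum_pow]
  exact sum_congr rfl fun s _ => (Real.finsetProd_rpow _ _ (fun i _ => hb _) p).symm

theorem stmt_9_general (n : ℕ) (b : Fin n → ℝ) (hb : ∀ i, 0 < b i ∧ b i < 1)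
    (r r' : ℝ) (hr' : 1 < r') (hrr' : 1 / r + 1 / r' = 1)
    (hsum : ∑ i, b i ^ r' = 1) (l : ℕ) :
    tnorm n b (∑ s : Fin l → Fin n,
      ((∏ i, b (s i)) ^ (r' / r)) • Finsupp.single (enc n l s) (1 : ℝ)) = 1 := by
  have hconj : r'.HolderConjugate r :=
    Real.holderConjugate_iff.mpr ⟨hr', by simpa only [one_div, add_comm] using hrr'⟩
  have hn : 0 < n := Nat.pos_of_ne_zero (by rintro rfl; simp at hsum)
  have hprod (s : Fin l → Fin n) : 0 < ∏ i, b (s i) := prod_pos fun i _ => (hb _).1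
  have hmass : ∑ s : Fin l → Fin n, (∏ i, b (s i)) ^ r' = 1 := by
    rw [sum_prod_rpow (fun i => (hb i).1.le), hsum, one_pow]
  simp only [Finsupp.smul_single_one]
  refine tnorm_eq_of_isW (fun f hf => ?_) (isW_productFunctional hn b l) ?_
  · refine (hf.linearCombination_le_sum_rpow_abs (fun i => (hb i).1) hconj hsum.le _).trans_eq ?_
    rw [Finsupp.sum_sum_single_of_injective (enc_injective n l) _ (by simp [hconj.symm.ne_zero])]
    have hpow (s : Fin l → Fin n) : |(∏ i, b (s i)) ^ (r' / r)| ^ r = (∏ i, b (s i)) ^ r' := by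
      rw [abs_of_pos (Real.rpow_pos_of_pos (hprod s) _), ← Real.rpow_mul (hprod s).le,
        div_mul_cancel₀ _ hconj.symm.ne_zero]
    rw [sum_congr rfl fun s _ => hpow s, hmass, Real.one_rpow]
  · rw [productFunctional, Finsupp.linearCombination_sum_single_of_injective (enc_injective n l),
      ← hmass, hconj.div_conj_eq_sub_one]
    exact sum_congr rfl fun s _ => by
      rw [Real.rpow_sub_one (hprod s).ne', mul_div_cancel₀ _ (hprod s).ne']

/-- the vector `x_l = ∑_{s ∈ M_l} (∏_i b_{s_i})^{r'/r} e_s` has Tsirelson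
norm exactly `1` in `T(𝒜_n, b̄)`. -/
theorem stmt_9 (n : ℕ) (hn : 2 ≤ n) (b : Fin n → ℝ) (hb : ∀ i, 0 < b i ∧ b i < 1)
    (r r' : ℝ) (hr' : 1 < r') (hrr' : 1 / r + 1 / r' = 1)
    (hsum : ∑ i, b i ^ r' = 1) (l : ℕ) :
    tnorm n b (∑ s : Fin l → Fin n,
      ((∏ i, b (s i)) ^ (r' / r)) • Finsupp.single (enc n l s) (1 : ℝ)) = 1 :=
  stmt_9_general n b hb r r' hr' hrr' hsum l
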